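/- arXiv:1102.5280 — 2 statements merged into one kernel-verified Lean document; each statement's English description precedes it below -/
import Mathlib

section
/- For finite groups G, H, subgroups K, K' ≤ G and homomorphisms φ : K → H, φ' : K' → H, the bisets H ×_{K,φ} G and H ×_{K',φ'} G are isomorphic as (G,H)-bisets if and only if there exist g ∈ G and h ∈ H such that K' = gKg⁻¹ and φ'(gkg⁻¹) = hφ(k)h⁻¹ for all k ∈ K. -/
section

variable {G H : Type*} [Group G] [Group H]

/-- The relation on `H × G` generating `(h, kg) ∼ (hφ(k), g)` for `k ∈ K`. -/
def cosetRel (K : Subgroup G) (φ : K →* H) (a b : H × G) : Prop :=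
  ∃ k : K, b.1 = a.1 * φ k ∧ b.2 = (k : G)⁻¹ * a.2

/-- The transitive left-free `(G,H)`-biset `H ×_{K,φ} G`. -/
def CosetBiset (K : Subgroup G) (φ : K →* H) : Type _ := Quot (cosetRel K φ)

variable {K : Subgroup G} {φ : K →* H}

/-- Left `H`-action on `H ×_{K,φ} G`. -/
def cbLeft (h₀ : H) : CosetBiset K φ → CosetBiset K φ :=
  Quot.map (fun a => (h₀ * a.1, a.2))
    (by rintro a b ⟨k, h1, h2⟩; exact ⟨k, by simp only []; rw [h1, mul_assoc], h2⟩)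

/-- Right `G`-action on `H ×_{K,φ} G`. -/
def cbRight (g₀ : G) : CosetBiset K φ → CosetBiset K φ :=
  Quot.map (fun a => (a.1, a.2 * g₀))
    (by rintro a b ⟨k, h1, h2⟩; exact ⟨k, h1, by simp only []; rw [h2, mul_assoc]⟩)

end


/-! `H ×_{K,φ} G` is a transitive `H × G`-set, and `[a] = [b]` exactly when
`(a₁⁻¹ b₁, a₂ b₂⁻¹)` lies in the twisted diagonal `Δ(K, φ) = {(φ k, k) | k ∈ K}`, the stabiliser
of `[1, 1]`. A biset isomorphism sending `[1, 1]` to `[h, g]` is `[x, y] ↦ [x h, g y]`, so it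
conjugates `Δ(K, φ)` onto `Δ(K', φ')` by `(h⁻¹, g)`; conversely, if `(h⁻¹, g)` conjugates one
twisted diagonal onto the other, this formula is a well defined biset isomorphism. Finally
`Δ(K', φ') = (h, g) Δ(K, φ) (h, g)⁻¹` unfolds to `K' = g K g⁻¹` and `φ'(g k g⁻¹) = h φ(k) h⁻¹`. -/

section

variable {G H : Type*} [Group G] [Group H]

def twistedDiag (K : Subgroup G) (φ : K →* H) : Subgroup (H × G) :=
  (φ.prod K.subtype).range

variable {K K' : Subgroup G} {φ : K →* H} {φ' : K' →* H}

lemma mem_twistedDiag {p : H × G} :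
    p ∈ twistedDiag K φ ↔ ∃ hp : p.2 ∈ K, φ ⟨p.2, hp⟩ = p.1 := by
  constructor
  · rintro ⟨k, rfl⟩
    exact ⟨k.2, rfl⟩
  · rintro ⟨hp, hφ⟩
    exact ⟨⟨p.2, hp⟩, Prod.ext hφ rfl⟩

lemma mem_map_conj_twistedDiag {h : H} {g : G} {p : H × G} :
    p ∈ (twistedDiag K φ).map (MulAut.conj (h, g)).toMonoidHom ↔
      ∃ hp : g⁻¹ * p.2 * g ∈ K, φ ⟨_, hp⟩ = h⁻¹ * p.1 * h := by
  rw [Subgroup.mem_map_equiv, MulAut.conj_symm_apply, mem_twistedDiag]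
  rfl

lemma twistedDiag_eq_map_conj_iff (h : H) (g : G) :
    twistedDiag K' φ' = (twistedDiag K φ).map (MulAut.conj (h, g)).toMonoidHom ↔
      K' = K.map (MulAut.conj g).toMonoidHom ∧
        ∀ (k : K) (k' : K'), (k' : G) = g * k * g⁻¹ → φ' k' = h * φ k * h⁻¹ := by
  simp only [SetLike.ext_iff, mem_map_conj_twistedDiag]
  simp only [Prod.forall, mem_twistedDiag, Subgroup.mem_map_equiv, MulAut.conj_symm_apply]
  constructor
  · intro hΔ
    have hK : ∀ x, x ∈ K' ↔ g⁻¹ * x * g ∈ K := fun x =>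
      ⟨fun hx => ((hΔ (φ' ⟨x, hx⟩) x).1 ⟨hx, rfl⟩).1,
        fun hx => ((hΔ (h * φ ⟨_, hx⟩ * h⁻¹) x).2 ⟨hx, by group⟩).1⟩
    refine ⟨hK, fun k k' hk' => ?_⟩
    obtain ⟨hk, hφ⟩ := (hΔ (φ' k') k').1 ⟨k'.2, rfl⟩
    have hk_eq : (⟨g⁻¹ * k' * g, hk⟩ : K) = k :=
      Subtype.ext <| show g⁻¹ * k' * g = k by rw [hk']; group
    rw [← hk_eq, hφ]
    group
  · rintro ⟨hK, hφ⟩ y x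
    constructor
    · rintro ⟨hx, hy⟩
      refine ⟨(hK x).1 hx, ?_⟩
      rw [← hy, hφ ⟨_, (hK x).1 hx⟩ ⟨x, hx⟩ (by group)]
      group
    · rintro ⟨hx, hy⟩
      refine ⟨(hK x).2 hx, ?_⟩
      rw [hφ ⟨_, hx⟩ ⟨x, (hK x).2 hx⟩ (by group), hy]
      group

lemma cosetRel_iff_mem_twistedDiag {a b : H × G} :
    cosetRel K φ a b ↔ (a.1⁻¹ * b.1, a.2 * b.2⁻¹) ∈ twistedDiag K φ := by
  rw [mem_twistedDiag]
  constructor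
  · rintro ⟨k, h1, h2⟩
    have hk : a.2 * b.2⁻¹ = k := by rw [h2]; group
    simp only [hk, SetLike.coe_mem, exists_true_left, h1, inv_mul_cancel_left]
  · rintro ⟨hk, hφ⟩
    refine ⟨⟨_, hk⟩, ?_, ?_⟩
    · rw [hφ, mul_inv_cancel_left]
    · group

lemma cosetRel_equivalence (K : Subgroup G) (φ : K →* H) : Equivalence (cosetRel K φ) where
  refl a := ⟨1, by simp, by simp⟩
  symm := by
    rintro a b ⟨k, h1, h2⟩
    refine ⟨k⁻¹, ?_, ?_⟩
    · rw [h1, map_inv]; group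
    · rw [h2]; push_cast; group
  trans := by
    rintro a b c ⟨k, h1, h2⟩ ⟨l, h3, h4⟩
    refine ⟨k * l, ?_, ?_⟩
    · rw [h3, h1, map_mul]; group
    · rw [h4, h2]; push_cast; group

namespace CosetBiset

abbrev mk (a : H × G) : CosetBiset K φ := Quot.mk _ a

@[simp]
lemma cbLeft_mk (h₀ : H) (a : H × G) : cbLeft h₀ (mk a : CosetBiset K φ) = mk (h₀ * a.1, a.2) :=
  rfl

@[simp]
lemma cbRight_mk (g₀ : G) (a : H × G) : cbRight g₀ (mk a : CosetBiset K φ) = mk (a.1, a.2 * g₀) :=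
  rfl

lemma mk_eq_mk_iff {a b : H × G} : (mk a : CosetBiset K φ) = mk b ↔ cosetRel K φ a b :=
  (cosetRel_equivalence K φ).quot_mk_eq_iff a b

def IsBisetHom (f : CosetBiset K φ → CosetBiset K' φ') : Prop :=
  (∀ (h₀ : H) (q : CosetBiset K φ), f (cbLeft h₀ q) = cbLeft h₀ (f q)) ∧
    (∀ (g₀ : G) (q : CosetBiset K φ), f (cbRight g₀ q) = cbRight g₀ (f q))

def twist (c : H × G) : H × G ≃ H × G :=
  (Equiv.mulRight c.1⁻¹).prodCongr (Equiv.mulLeft c.2)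

@[simp]
lemma twist_apply (c a : H × G) : twist c a = (a.1 * c.1⁻¹, c.2 * a.2) := rfl

lemma cosetRel_twist_iff (c : H × G) {a b : H × G} :
    cosetRel K φ (twist c a) (twist c b) ↔
      MulAut.conj c (a.1⁻¹ * b.1, a.2 * b.2⁻¹) ∈ twistedDiag K φ := by
  rw [cosetRel_iff_mem_twistedDiag]
  apply Iff.of_eq
  congr 1
  ext <;> simp only [twist_apply, MulAut.conj_apply, Prod.fst_mul, Prod.snd_mul, Prod.fst_inv,
    Prod.snd_inv] <;> group

lemma IsBisetHom.apply_mk {f : CosetBiset K φ → CosetBiset K' φ'} (hf : IsBisetHom f)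
    {h₀ : H} {g₀ : G} (h₁ : f (mk (1, 1)) = mk (h₀, g₀)) (a : H × G) :
    f (mk a) = mk (a.1 * h₀, g₀ * a.2) := by
  have ha : (mk a : CosetBiset K φ) = cbLeft a.1 (cbRight a.2 (mk (1, 1))) := by
    simp only [cbLeft_mk, cbRight_mk, one_mul, mul_one]
  rw [ha, hf.1, hf.2, h₁]
  rfl

lemma twistedDiag_eq_map_conj_of_bisetEquiv (e : CosetBiset K φ ≃ CosetBiset K' φ')
    (he : IsBisetHom e) :
    ∃ c : H × G, twistedDiag K' φ' = (twistedDiag K φ).map (MulAut.conj c).toMonoidHom := by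
  obtain ⟨⟨h₀, g₀⟩, h₁⟩ : ∃ a : H × G, mk a = e (mk (1, 1)) := Quot.exists_rep _
  set c : H × G := (h₀⁻¹, g₀)
  have hrel : ∀ a b : H × G, cosetRel K φ a b ↔ cosetRel K' φ' (twist c a) (twist c b) :=
    fun a b => by rw [← mk_eq_mk_iff, ← e.apply_eq_iff_eq, he.apply_mk h₁.symm,
      he.apply_mk h₁.symm, mk_eq_mk_iff, twist_apply, twist_apply, inv_inv]
  have hΔ : ∀ q : H × G, q ∈ twistedDiag K φ ↔ MulAut.conj c q ∈ twistedDiag K' φ' := by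
    -- `q` is the difference `(a₁⁻¹ b₁, a₂ b₂⁻¹)` of `a = (1, 1)` and `b = (q₁, q₂⁻¹)`
    intro q
    have := hrel (1, 1) (q.1, q.2⁻¹)
    rwa [cosetRel_iff_mem_twistedDiag, cosetRel_twist_iff, inv_one, one_mul, one_mul, inv_inv]
      at this
  exact ⟨c, SetLike.ext fun p => by
    rw [Subgroup.mem_map_equiv, hΔ, MulEquiv.apply_symm_apply]⟩

def equivOfConj (c : H × G)
    (hΔ : twistedDiag K' φ' = (twistedDiag K φ).map (MulAut.conj c).toMonoidHom) :
    CosetBiset K φ ≃ CosetBiset K' φ' :=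
  Quot.congr (twist c) fun a b => by
    rw [cosetRel_twist_iff, hΔ, Subgroup.mem_map_equiv, MulEquiv.symm_apply_apply,
      cosetRel_iff_mem_twistedDiag]

@[simp]
lemma equivOfConj_mk (c : H × G)
    (hΔ : twistedDiag K' φ' = (twistedDiag K φ).map (MulAut.conj c).toMonoidHom) (a : H × G) :
    equivOfConj c hΔ (mk a) = mk (twist c a) :=
  rfl

lemma isBisetHom_equivOfConj (c : H × G)
    (hΔ : twistedDiag K' φ' = (twistedDiag K φ).map (MulAut.conj c).toMonoidHom) :
    IsBisetHom (equivOfConj c hΔ) := by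
  refine ⟨fun h₀ => Quot.ind fun a => ?_, fun g₀ => Quot.ind fun a => ?_⟩ <;>
    simp only [equivOfConj_mk, cbLeft_mk, cbRight_mk, twist_apply, mul_assoc]

end CosetBiset

end

theorem stmt_6_general {G H : Type*} [Group G] [Group H]
    (K K' : Subgroup G) (φ : K →* H) (φ' : K' →* H) :
    (∃ e : CosetBiset K φ ≃ CosetBiset K' φ',
      (∀ (h₀ : H) (q : CosetBiset K φ), e (cbLeft h₀ q) = cbLeft h₀ (e q)) ∧
      (∀ (g₀ : G) (q : CosetBiset K φ), e (cbRight g₀ q) = cbRight g₀ (e q))) ↔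
    (∃ (g : G) (h : H), K' = K.map (MulAut.conj g).toMonoidHom ∧
      ∀ (k : K) (k' : K'), (k' : G) = g * (k : G) * g⁻¹ →
        (φ' k' : H) = h * (φ k : H) * h⁻¹) := by
  constructor
  · rintro ⟨e, he⟩
    obtain ⟨⟨h, g⟩, hΔ⟩ := CosetBiset.twistedDiag_eq_map_conj_of_bisetEquiv e he
    exact ⟨g, h, (twistedDiag_eq_map_conj_iff h g).1 hΔ⟩
  · rintro ⟨g, h, hconj⟩
    have hΔ := (twistedDiag_eq_map_conj_iff h g).2 hconj
    exact ⟨CosetBiset.equivOfConj _ hΔ, CosetBiset.isBisetHom_equivOfConj _ hΔ⟩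

/-- `H ×_{K,φ} G ≅ H ×_{K',φ'} G` as `(G,H)`-bisets iff there are `g ∈ G`,
`h ∈ H` with `K' = gKg⁻¹` and `φ'(gkg⁻¹) = hφ(k)h⁻¹` for all `k ∈ K`. -/
theorem stmt_6 {G H : Type*} [Group G] [Group H] [Finite G] [Finite H]
    (K K' : Subgroup G) (φ : K →* H) (φ' : K' →* H) :
    (∃ e : CosetBiset K φ ≃ CosetBiset K' φ',
      (∀ (h₀ : H) (q : CosetBiset K φ), e (cbLeft h₀ q) = cbLeft h₀ (e q)) ∧
      (∀ (g₀ : G) (q : CosetBiset K φ), e (cbRight g₀ q) = cbRight g₀ (e q))) ↔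
    (∃ (g : G) (h : H), K' = K.map (MulAut.conj g).toMonoidHom ∧
      ∀ (k : K) (k' : K'), (k' : G) = g * (k : G) * g⁻¹ →
        (φ' k' : H) = h * (φ k : H) * h⁻¹) :=
  stmt_6_general K K' φ φ'
end

section
/- Let G be a finite group and let X, Y be finite left-free (G,G)-bisets. If Φ_{⟨K,φ⟩}(X) = Φ_{⟨K,φ⟩}(Y) for every subgroup K ≤ G and every homomorphism φ : K → G, then X and Y are isomorphic as (G,G)-bisets. -/
/-!
Viewing a `(G, G)`-biset as a `G × G`-set via `(a, b) • x = a · x · b⁻¹`, the point `x` is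
fixed by `(a, b)` iff `x · b = a · x`. A subgroup `L ≤ G × G` containing some `(a, 1)` with
`a ≠ 1` fixes nothing in a left-free biset; every other `L` is the graph `{(φ k, k)}` of a
homomorphism `φ : K → G`. So the hypothesis says that `X` and `Y` have the same table of marks
as `G × G`-sets, and the table of marks determines a finite `H`-set: pick `x₀ ∈ X` with maximal
stabilizer `S`; equal marks give `y₀ ∈ Y` with stabilizer `S` as well, the orbits of `x₀` and
`y₀` are both `H ⧸ S`, and the complements again have equal marks, so induction on `|X|`
finishes.
-/

open MulAction

section FixedPoints

variable {M α β : Type*} [Monoid M] [MulAction M α] [MulAction M β]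

theorem MulAction.card_fixedPoints_congr (e : α ≃ β)
    (he : ∀ (m : M) (a : α), e (m • a) = m • e a) :
    Nat.card (fixedPoints M α) = Nat.card (fixedPoints M β) :=
  Nat.card_congr <| e.subtypeEquiv fun a => by
    simp only [mem_fixedPoints, ← he, e.apply_eq_iff_eq]

theorem MulAction.card_fixedPoints_sum [Finite α] [Finite β] :
    Nat.card (fixedPoints M (α ⊕ β)) =
      Nat.card (fixedPoints M α) + Nat.card (fixedPoints M β) := by
  rw [← Nat.card_sum]
  exact Nat.card_congr <| Equiv.subtypeSum.trans <| Equiv.sumCongr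
    (Equiv.subtypeEquivRight fun a => by simp [mem_fixedPoints, Sum.smul_inl])
    (Equiv.subtypeEquivRight fun b => by simp [mem_fixedPoints, Sum.smul_inr])

end FixedPoints

section Group

variable {H X Y : Type*} [Group H] [MulAction H X] [MulAction H Y]

theorem MulAction.card_fixedPoints_bot :
    Nat.card (fixedPoints (⊥ : Subgroup H) X) = Nat.card X :=
  Nat.card_congr <| Equiv.subtypeUnivEquiv fun x ⟨g, hg⟩ => by
    rw [Subgroup.mk_smul, Subgroup.mem_bot.mp hg, one_smul]

theorem MulAction.exists_le_stabilizer_of_card_fixedPoints_eq [Finite X] {L : Subgroup H}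
    (h : Nat.card (fixedPoints L X) = Nat.card (fixedPoints L Y)) {x : X}
    (hx : L ≤ stabilizer H x) : ∃ y : Y, L ≤ stabilizer H y := by
  have : Nonempty (fixedPoints L X) := ⟨⟨x, fun g => hx g.2⟩⟩
  obtain ⟨⟨⟨y, hy⟩⟩, -⟩ := Nat.card_pos_iff.mp (h ▸ Nat.card_pos)
  exact ⟨y, fun g hg => hy ⟨g, hg⟩⟩

theorem MulAction.exists_stabilizer_eq_of_card_fixedPoints_eq [Finite X] [Finite Y]
    (h : ∀ L : Subgroup H, Nat.card (fixedPoints L X) = Nat.card (fixedPoints L Y)) {x₀ : X}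
    (hx₀ : ∀ x : X, stabilizer H x₀ ≤ stabilizer H x → stabilizer H x ≤ stabilizer H x₀) :
    ∃ y : Y, stabilizer H y = stabilizer H x₀ := by
  obtain ⟨y, hy⟩ := exists_le_stabilizer_of_card_fixedPoints_eq (h _) le_rfl (x := x₀)
  obtain ⟨x, hx⟩ := exists_le_stabilizer_of_card_fixedPoints_eq (h _).symm le_rfl (x := y)
  exact ⟨y, le_antisymm (hx.trans (hx₀ x (hy.trans hx))) hy⟩

theorem MulAction.exists_equiv_orbit_of_stabilizer_eq {x : X} {y : Y}
    (h : stabilizer H x = stabilizer H y) :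
    ∃ e : orbit H x ≃ orbit H y, ∀ (g : H) (a : orbit H x), e (g • a) = g • e a := by
  let e : orbit H x ≃ orbit H y := (orbitEquivQuotientStabilizer H x).trans
    ((Subgroup.quotientEquivOfEq h).trans (orbitEquivQuotientStabilizer H y).symm)
  have he (g : H) : e ⟨g • x, mem_orbit x g⟩ = ⟨g • y, mem_orbit y g⟩ := by
    have : orbitEquivQuotientStabilizer H x ⟨g • x, mem_orbit x g⟩ = g :=
      (Equiv.eq_symm_apply _).mp (Subtype.ext rfl)
    simp only [e, Equiv.trans_apply, this]
    rfl
  refine ⟨e, fun g ⟨a, g', hg'⟩ => ?_⟩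
  subst hg'
  have := he (g * g')
  simp only [mul_smul] at this
  exact this.trans (congrArg (g • ·) (he g')).symm

namespace SubMulAction

variable (H) in
def orbit (x : X) : SubMulAction H X where
  carrier := MulAction.orbit H x
  smul_mem' g _ hy := mapsTo_smul_orbit g x hy

noncomputable def sumComplEquiv (p : SubMulAction H X) : p ⊕ ↥pᶜ ≃ X :=
  open Classical in Equiv.Set.sumCompl (p : Set X)

theorem sumComplEquiv_smul (p : SubMulAction H X) (g : H) (z : p ⊕ ↥pᶜ) :
    sumComplEquiv p (g • z) = g • sumComplEquiv p z := by
  cases z <;> rfl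

theorem card_add_card_compl [Finite X] (p : SubMulAction H X) :
    Nat.card p + Nat.card ↥pᶜ = Nat.card X := by
  rw [← Nat.card_sum, Nat.card_congr (sumComplEquiv p)]

theorem card_fixedPoints_add_card_fixedPoints_compl [Finite X] (p : SubMulAction H X)
    (L : Subgroup H) :
    Nat.card (fixedPoints L p) + Nat.card (fixedPoints L ↥pᶜ) = Nat.card (fixedPoints L X) := by
  rw [← card_fixedPoints_sum]
  exact card_fixedPoints_congr (sumComplEquiv p) fun g z => sumComplEquiv_smul p g z

theorem exists_equiv_of_equiv_of_equiv_compl (p : SubMulAction H X) (q : SubMulAction H Y)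
    (e₁ : p ≃ q) (he₁ : ∀ (g : H) (a : p), e₁ (g • a) = g • e₁ a)
    (e₂ : ↥pᶜ ≃ ↥qᶜ) (he₂ : ∀ (g : H) (a : ↥pᶜ), e₂ (g • a) = g • e₂ a) :
    ∃ e : X ≃ Y, ∀ (g : H) (x : X), e (g • x) = g • e x := by
  refine ⟨(sumComplEquiv p).symm.trans ((e₁.sumCongr e₂).trans (sumComplEquiv q)), fun g x => ?_⟩
  obtain ⟨z, rfl⟩ := (sumComplEquiv p).surjective x
  rw [← sumComplEquiv_smul]
  simp only [Equiv.trans_apply, Equiv.symm_apply_apply, ← sumComplEquiv_smul]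
  congr 1
  cases z <;> simp [Sum.smul_inl, Sum.smul_inr, he₁, he₂]

end SubMulAction

theorem MulAction.exists_equiv_of_card_fixedPoints_eq [Finite X] [Finite Y]
    (h : ∀ L : Subgroup H, Nat.card (fixedPoints L X) = Nat.card (fixedPoints L Y)) :
    ∃ e : X ≃ Y, ∀ (g : H) (x : X), e (g • x) = g • e x := by
  induction hn : Nat.card X using Nat.strong_induction_on generalizing X Y with
  | _ n ih =>
  rcases isEmpty_or_nonempty X with hX | hX
  · have : IsEmpty Y := by
      rw [← Finite.card_eq_zero_iff, ← card_fixedPoints_bot (H := H), ← h,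
        card_fixedPoints_bot, Finite.card_eq_zero_iff]
      exact hX
    exact ⟨Equiv.equivOfIsEmpty X Y, fun g x => isEmptyElim x⟩
  obtain ⟨x₀, -, hx₀⟩ :=
    Set.Finite.exists_maximalFor (stabilizer H : X → _) Set.univ Set.finite_univ Set.univ_nonempty
  obtain ⟨y₀, hy₀⟩ := exists_stabilizer_eq_of_card_fixedPoints_eq h (x₀ := x₀) fun x => hx₀ trivial
  let p := SubMulAction.orbit H x₀
  let q := SubMulAction.orbit H y₀
  obtain ⟨e₁, he₁⟩ : ∃ e : p ≃ q, ∀ (g : H) (a : p), e (g • a) = g • e a :=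
    exists_equiv_orbit_of_stabilizer_eq hy₀.symm
  have hcompl (L : Subgroup H) :
      Nat.card (fixedPoints L ↥pᶜ) = Nat.card (fixedPoints L ↥qᶜ) := by
    have := h L
    rw [← p.card_fixedPoints_add_card_fixedPoints_compl,
      ← q.card_fixedPoints_add_card_fixedPoints_compl,
      card_fixedPoints_congr (M := L) e₁ fun g a => he₁ g a] at this
    omega
  have hlt : Nat.card ↥pᶜ < n := by
    have : Nonempty p := ⟨⟨x₀, mem_orbit_self x₀⟩⟩
    have := Nat.card_pos (α := p)
    have := p.card_add_card_compl
    omega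
  obtain ⟨e₂, he₂⟩ := ih _ hlt hcompl rfl
  exact p.exists_equiv_of_equiv_of_equiv_compl q e₁ he₁ e₂ he₂

end Group

theorem MulAction.fixedPoints_subgroup_eq_of_coe_eq_range {M Z ι : Type*} [Group M]
    [MulAction M Z] {L : Subgroup M} {f : ι → M} (hL : (L : Set M) = Set.range f) :
    fixedPoints L Z = {z | ∀ i, f i • z = z} := by
  have hmem (p : M) : p ∈ L ↔ p ∈ Set.range f := by rw [← hL, SetLike.mem_coe]
  ext z
  refine ⟨fun h i => h ⟨f i, (hmem _).mpr (Set.mem_range_self i)⟩, fun h ⟨p, hp⟩ => ?_⟩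
  obtain ⟨i, rfl⟩ := (hmem p).mp hp
  exact h i

theorem Subgroup.exists_hom_of_mk_one_mem_eq_one {G G' : Type*} [Group G] [Group G']
    (L : Subgroup (G × G')) (hL : ∀ a : G, (a, 1) ∈ L → a = 1) :
    ∃ (K : Subgroup G') (φ : K →* G), (L : Set (G × G')) = Set.range fun k => (φ k, (k : G')) := by
  let f : L →* G' := (MonoidHom.snd G G').comp L.subtype
  have hf : Function.Injective f := (injective_iff_map_eq_one f).mpr fun ⟨⟨a, b⟩, hab⟩ h => by
    obtain rfl : b = 1 := h
    obtain rfl := hL a hab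
    rfl
  let e := MonoidHom.ofInjective hf
  refine ⟨f.range, ((MonoidHom.fst G G').comp L.subtype).comp e.symm.toMonoidHom, ?_⟩
  ext p
  constructor
  · intro hp
    exact ⟨e ⟨p, hp⟩, by simp [e, f, MonoidHom.ofInjective_apply]⟩
  · rintro ⟨k, rfl⟩
    obtain ⟨q, rfl⟩ := e.surjective k
    simp [e, f, MonoidHom.ofInjective_apply]

section LeftFree

variable {G X Y : Type*} [Group G] [MulAction (G × G) X] [MulAction (G × G) Y]

theorem MulAction.card_fixedPoints_eq_zero_of_mk_one_mem
    (free : ∀ (a : G) (x : X), (a, (1 : G)) • x = x → a = 1) {L : Subgroup (G × G)} {a : G}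
    (ha : (a, 1) ∈ L) (ha₁ : a ≠ 1) : Nat.card (fixedPoints L X) = 0 :=
  have : IsEmpty (fixedPoints L X) := ⟨fun ⟨x, hx⟩ => ha₁ (free a x (hx ⟨_, ha⟩))⟩
  Nat.card_of_isEmpty

theorem MulAction.card_fixedPoints_eq_of_forall_graph
    (freeX : ∀ (a : G) (x : X), (a, (1 : G)) • x = x → a = 1)
    (freeY : ∀ (a : G) (y : Y), (a, (1 : G)) • y = y → a = 1)
    (hgraph : ∀ (K : Subgroup G) (φ : K →* G),
      Nat.card {x : X // ∀ k : K, (φ k, (k : G)) • x = x} =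
        Nat.card {y : Y // ∀ k : K, (φ k, (k : G)) • y = y})
    (L : Subgroup (G × G)) : Nat.card (fixedPoints L X) = Nat.card (fixedPoints L Y) := by
  by_cases hL : ∀ a : G, (a, 1) ∈ L → a = 1
  · obtain ⟨K, φ, hKφ⟩ := L.exists_hom_of_mk_one_mem_eq_one hL
    rw [fixedPoints_subgroup_eq_of_coe_eq_range hKφ, fixedPoints_subgroup_eq_of_coe_eq_range hKφ]
    exact hgraph K φ
  · push Not at hL
    obtain ⟨a, ha, ha₁⟩ := hL
    rw [card_fixedPoints_eq_zero_of_mk_one_mem freeX ha ha₁,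
      card_fixedPoints_eq_zero_of_mk_one_mem freeY ha ha₁]

end LeftFree

section Biset

variable {G X : Type*} [Group G]

/-- The `G × G`-set of a `(G, G)`-biset, `(a, b) • x = a · x · b⁻¹`, where `l a x = a · x` and
`r b x = x · b`. -/
abbrev MulAction.ofBiset (l r : G → X → X) (l_one : ∀ x, l 1 x = x)
    (l_mul : ∀ a b x, l (a * b) x = l a (l b x)) (r_one : ∀ x, r 1 x = x)
    (r_mul : ∀ a b x, r (a * b) x = r b (r a x)) (lr : ∀ a b x, l a (r b x) = r b (l a x)) :
    MulAction (G × G) X where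
  smul p x := l p.1 (r p.2⁻¹ x)
  one_smul x := by
    change l 1 (r 1⁻¹ x) = x
    rw [inv_one, r_one, l_one]
  mul_smul p q x := by
    change l (p.1 * q.1) (r (p.2 * q.2)⁻¹ x) = l p.1 (r p.2⁻¹ (l q.1 (r q.2⁻¹ x)))
    rw [l_mul, mul_inv_rev, r_mul, ← lr]

theorem biset_left_right_inv_eq_self_iff {l r : G → X → X} (r_one : ∀ x, r 1 x = x)
    (r_mul : ∀ a b x, r (a * b) x = r b (r a x)) (lr : ∀ a b x, l a (r b x) = r b (l a x))
    (a b : G) (x : X) : l a (r b⁻¹ x) = x ↔ r b x = l a x := by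
  have r_inv (z : X) : r b (r b⁻¹ z) = z := by rw [← r_mul, inv_mul_cancel, r_one]
  have r_inv' (z : X) : r b⁻¹ (r b z) = z := by rw [← r_mul, mul_inv_cancel, r_one]
  constructor
  · intro h
    rw [← h, ← lr, r_inv, h]
  · intro h
    rw [lr, ← h, r_inv']

end Biset

theorem stmt_8_general {G : Type*} [Group G]
    (X Y : Type*) [Finite X] [Finite Y]
    (lX : G → X → X) (rX : G → X → X) (lY : G → Y → Y) (rY : G → Y → Y)
    (lX_one : ∀ x, lX 1 x = x) (lX_mul : ∀ a b x, lX (a * b) x = lX a (lX b x))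
    (rX_one : ∀ x, rX 1 x = x) (rX_mul : ∀ a b x, rX (a * b) x = rX b (rX a x))
    (lrX : ∀ a b x, lX a (rX b x) = rX b (lX a x))
    (freeX : ∀ a x, lX a x = x → a = 1)
    (lY_one : ∀ y, lY 1 y = y) (lY_mul : ∀ a b y, lY (a * b) y = lY a (lY b y))
    (rY_one : ∀ y, rY 1 y = y) (rY_mul : ∀ a b y, rY (a * b) y = rY b (rY a y))
    (lrY : ∀ a b y, lY a (rY b y) = rY b (lY a y))
    (freeY : ∀ a y, lY a y = y → a = 1)
    (hfix : ∀ (K : Subgroup G) (φ : K →* G),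
      Nat.card {x : X // ∀ k : K, rX (k : G) x = lX (φ k) x} =
      Nat.card {y : Y // ∀ k : K, rY (k : G) y = lY (φ k) y}) :
    ∃ e : X ≃ Y, (∀ a x, e (lX a x) = lY a (e x)) ∧ (∀ a x, e (rX a x) = rY a (e x)) := by
  let _ : MulAction (G × G) X := .ofBiset lX rX lX_one lX_mul rX_one rX_mul lrX
  let _ : MulAction (G × G) Y := .ofBiset lY rY lY_one lY_mul rY_one rY_mul lrY
  have smulX (p : G × G) (x : X) : p • x = lX p.1 (rX p.2⁻¹ x) := rfl
  have smulY (p : G × G) (y : Y) : p • y = lY p.1 (rY p.2⁻¹ y) := rfl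
  have hmarks := card_fixedPoints_eq_of_forall_graph
    (fun a x h => freeX a x (by simpa [smulX, rX_one] using h))
    (fun a y h => freeY a y (by simpa [smulY, rY_one] using h))
    (fun K φ => by
      simpa only [smulX, smulY, biset_left_right_inv_eq_self_iff rX_one rX_mul lrX,
        biset_left_right_inv_eq_self_iff rY_one rY_mul lrY] using hfix K φ)
  obtain ⟨e, he⟩ := exists_equiv_of_card_fixedPoints_eq hmarks
  refine ⟨e, fun a x => ?_, fun b x => ?_⟩
  · simpa [smulX, smulY, rX_one, rY_one] using he (a, 1) x
  · simpa [smulX, smulY, lX_one, lY_one] using he (1, b⁻¹) x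

/-- Two finite left-free `(G,G)`-bisets with the same fixed-point counts
`Φ_⟨K,φ⟩` for all subgroups `K ≤ G` and homomorphisms `φ : K → G` are isomorphic. -/
theorem stmt_8 {G : Type*} [Group G] [Finite G]
    (X Y : Type*) [Finite X] [Finite Y]
    (lX : G → X → X) (rX : G → X → X) (lY : G → Y → Y) (rY : G → Y → Y)
    (lX_one : ∀ x, lX 1 x = x) (lX_mul : ∀ a b x, lX (a * b) x = lX a (lX b x))
    (rX_one : ∀ x, rX 1 x = x) (rX_mul : ∀ a b x, rX (a * b) x = rX b (rX a x))
    (lrX : ∀ a b x, lX a (rX b x) = rX b (lX a x))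
    (freeX : ∀ a x, lX a x = x → a = 1)
    (lY_one : ∀ y, lY 1 y = y) (lY_mul : ∀ a b y, lY (a * b) y = lY a (lY b y))
    (rY_one : ∀ y, rY 1 y = y) (rY_mul : ∀ a b y, rY (a * b) y = rY b (rY a y))
    (lrY : ∀ a b y, lY a (rY b y) = rY b (lY a y))
    (freeY : ∀ a y, lY a y = y → a = 1)
    (hfix : ∀ (K : Subgroup G) (φ : K →* G),
      Nat.card {x : X // ∀ k : K, rX (k : G) x = lX (φ k) x} =
      Nat.card {y : Y // ∀ k : K, rY (k : G) y = lY (φ k) y}) :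
    ∃ e : X ≃ Y, (∀ a x, e (lX a x) = lY a (e x)) ∧ (∀ a x, e (rX a x) = rY a (e x)) :=
  stmt_8_general X Y lX rX lY rY lX_one lX_mul rX_one rX_mul lrX freeX lY_one lY_mul rY_one rY_mul
    lrY freeY hfix
end
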